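/- arXiv:math/0408050 — 2 statements merged into one kernel-verified Lean document; each statement's English description precedes it below -/
import Mathlib

section
/- With φ_{q,0} as defined below, for every negative index μ with p+1 ≤ μ ≤ p+q one has Σ_{α=1}^{p} (z_α· ⊗ A(ω_{α,μ}) ⊗ 1) φ_{q,0} = 0 in P ⊗ E ⊗ T^0. -/
open scoped TensorProduct
open Finset

noncomputable section

namespace FockModel

/-- The polynomial algebra `ℂ[z_1, …, z_{p+q}]` (Fock model, `n = 1`). -/
abbrev P (p q : ℕ) := MvPolynomial (Fin (p + q)) ℂ

/-- The vector space with basis `{ω_{α,μ}}` indexed by pairs of a positive and a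
negative index. -/
abbrev Om (p q : ℕ) := (Fin p × Fin q) → ℂ

/-- The exterior algebra on the `ω_{α,μ}`. -/
abbrev E (p q : ℕ) := ExteriorAlgebra ℂ (Om p q)

/-- `ℂ^{p+q}`. -/
abbrev Vc (p q : ℕ) := Fin (p + q) → ℂ

/-- The `ℓ`-fold tensor power `T^ℓ = (ℂ^{p+q})^{⊗ℓ}`; here only `T^0` is used. -/
abbrev T (p q ℓ : ℕ) := ⨂[ℂ] (_ : Fin ℓ), Vc p q

/-- The ambient space `P ⊗ E ⊗ T^ℓ`. -/
abbrev F (p q ℓ : ℕ) := (P p q ⊗[ℂ] E p q) ⊗[ℂ] T p q ℓ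

/-- The basis vector `ω_{α,μ}` of the exterior algebra. -/
def ω (p q : ℕ) (α : Fin p) (μ : Fin q) : E p q :=
  ExteriorAlgebra.ι ℂ (Pi.single (α, μ) 1)

/-- The scalar-valued Schwartz form
`φ_{q,0} = 2^{q/2}(−i/(4π))^{q} Σ_a (z_{a(1)} ⋯ z_{a(q)}) ⊗
(ω_{a(1),p+1} ∧ ⋯ ∧ ω_{a(q),p+q}) ⊗ 1` in the Fock model. -/
def phiQ0 (p q : ℕ) : F p q 0 :=
  ((2 : ℂ) ^ ((q : ℂ) / 2) * (-Complex.I / (4 * (Real.pi : ℂ))) ^ q) •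
    ∑ a : Fin q → Fin p,
      ((∏ k : Fin q, MvPolynomial.X (Fin.castAdd q (a k)) : P p q)
        ⊗ₜ[ℂ] (List.ofFn fun μ : Fin q => ω p q (a μ) μ).prod)
      ⊗ₜ[ℂ] PiTensorProduct.tprod ℂ (fun k : Fin 0 => (Fin.elim0 k : Vc p q))

open ExteriorAlgebra in
lemma key {M : Type*} [AddCommGroup M] [Module ℂ M] :
    ∀ (q : ℕ) (μ : Fin q) (w : Fin q → M) (u v : M),
    ι ℂ u * (List.ofFn fun k => ι ℂ (Function.update w μ v k)).prod
    + ι ℂ v * (List.ofFn fun k => ι ℂ (Function.update w μ u k)).prod = 0 := by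
  intro q
  induction q with
  | zero => exact fun μ => μ.elim0
  | succ n ih =>
    intro μ w u v
    induction μ using Fin.cases with
    | zero =>
      have h0 : ∀ (x : M) (k : Fin n),
          Function.update w 0 x k.succ = w k.succ := fun x k =>
        Function.update_of_ne (Fin.succ_ne_zero k) _ _
      simp only [List.ofFn_succ, List.prod_cons, Function.update_self, h0, ← mul_assoc]
      rw [← add_mul, ι_add_mul_swap, zero_mul]
    | succ j =>
      have h0 : ∀ (x : M), Function.update w j.succ x 0 = w 0 := fun x =>
        Function.update_of_ne (Fin.succ_ne_zero j).symm _ _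
      have hs : ∀ (x : M) (k : Fin n),
          Function.update w j.succ x k.succ = Function.update (fun i => w (Fin.succ i)) j x k := by
        intro x k
        rcases eq_or_ne k j with rfl | hk
        · simp
        · rw [Function.update_of_ne (fun h => hk (Fin.succ_injective _ h)),
            Function.update_of_ne hk]
      simp only [List.ofFn_succ, List.prod_cons, h0, hs, ← mul_assoc]
      have swap : ∀ x : M, ι ℂ x * ι ℂ (w 0) = - (ι ℂ (w 0) * ι ℂ x) := by
        intro x; rw [eq_neg_iff_add_eq_zero, ι_add_mul_swap]
      rw [swap u, swap v, neg_mul, neg_mul, ← neg_add, mul_assoc, mul_assoc, ← mul_add,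
        ih j _ u v, mul_zero, neg_zero]

/-- Paired vanishing of the exterior parts. -/
lemma ext_pair (p q : ℕ) (μ : Fin q) (α : Fin p) (a : Fin q → Fin p) :
    ω p q α μ * (List.ofFn fun k => ω p q (a k) k).prod
    + ω p q (a μ) μ * (List.ofFn fun k => ω p q (Function.update a μ α k) k).prod = 0 := by
  classical
  have hW : (fun k => (Pi.single (a k, k) 1 : Om p q))
      = Function.update (fun k => (Pi.single (a k, k) 1 : Om p q)) μ
        (Pi.single (a μ, μ) 1) := by
    rw [Function.update_eq_self]
  have hW' : (fun k => (Pi.single (Function.update a μ α k, k) 1 : Om p q))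
      = Function.update (fun k => (Pi.single (a k, k) 1 : Om p q)) μ
        (Pi.single (α, μ) 1) := by
    funext k
    rcases eq_or_ne k μ with rfl | hk
    · simp
    · rw [Function.update_of_ne hk, Function.update_of_ne hk]
  simp only [ω]
  calc ExteriorAlgebra.ι ℂ (Pi.single (α, μ) 1) *
        (List.ofFn fun k => ExteriorAlgebra.ι ℂ (Pi.single (a k, k) (1:ℂ))).prod
      + ExteriorAlgebra.ι ℂ (Pi.single (a μ, μ) 1) *
        (List.ofFn fun k =>
          ExteriorAlgebra.ι ℂ (Pi.single (Function.update a μ α k, k) (1:ℂ))).prod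
      = ExteriorAlgebra.ι ℂ (Pi.single (α, μ) 1) *
        (List.ofFn fun k => ExteriorAlgebra.ι ℂ
          (Function.update (fun k => (Pi.single (a k, k) 1 : Om p q)) μ
            (Pi.single (a μ, μ) 1) k)).prod
      + ExteriorAlgebra.ι ℂ (Pi.single (a μ, μ) 1) *
        (List.ofFn fun k => ExteriorAlgebra.ι ℂ
          (Function.update (fun k => (Pi.single (a k, k) 1 : Om p q)) μ
            (Pi.single (α, μ) 1) k)).prod := by
        rw [← hW, ← hW']
    _ = 0 := key q μ _ _ _

/-- The polynomial parts match under the swap. -/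
lemma poly_pair (p q : ℕ) (μ : Fin q) (α : Fin p) (a : Fin q → Fin p) :
    (MvPolynomial.X (Fin.castAdd q α) : P p q) * ∏ k : Fin q, MvPolynomial.X (Fin.castAdd q (a k))
    = (MvPolynomial.X (Fin.castAdd q (a μ)) : P p q) *
        ∏ k : Fin q, MvPolynomial.X (Fin.castAdd q (Function.update a μ α k)) := by
  classical
  have h1 : (fun k => (MvPolynomial.X (Fin.castAdd q (Function.update a μ α k)) : P p q))
      = Function.update (fun k => (MvPolynomial.X (Fin.castAdd q (a k)) : P p q)) μ
          (MvPolynomial.X (Fin.castAdd q α)) := by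
    funext k
    rcases eq_or_ne k μ with rfl | hk
    · simp
    · rw [Function.update_of_ne hk, Function.update_of_ne hk]
  rw [h1, Finset.prod_update_of_mem (Finset.mem_univ μ),
    ← Finset.mul_prod_erase Finset.univ _ (Finset.mem_univ μ), mul_left_comm]
  simp [Finset.sdiff_singleton_eq_erase]

/-- **Vanishing identity used for closedness (Theorem 6.3):**
for every negative index `μ`, `Σ_{α=1}^{p} (z_α· ⊗ A(ω_{α,μ}) ⊗ 1) φ_{q,0} = 0`. -/
theorem sum_zalpha_wedge_phiQ0 (p q : ℕ) (hp : 1 ≤ p) (hq : 1 ≤ q) (μ : Fin q) :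
    (∑ α : Fin p,
        TensorProduct.map
          (TensorProduct.map
            (LinearMap.mulLeft ℂ (MvPolynomial.X (Fin.castAdd q α) : P p q))
            (LinearMap.mulLeft ℂ (ω p q α μ)))
          LinearMap.id)
        (phiQ0 p q)
      = 0 := by
  classical
  rw [LinearMap.sum_apply]
  simp only [phiQ0, map_smul, map_sum, TensorProduct.map_tmul, LinearMap.mulLeft_apply,
    LinearMap.id_coe, id_eq]
  rw [← Finset.smul_sum]
  rw [← Finset.sum_product']
  convert smul_zero _
  refine Finset.sum_ninvolution (fun x => (x.2 μ, Function.update x.2 μ x.1)) ?_ ?_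
    (fun _ => Finset.mem_univ _) ?_
  · rintro ⟨α, a⟩
    simp only
    rw [← TensorProduct.add_tmul, poly_pair p q μ α a, ← TensorProduct.tmul_add,
      ext_pair p q μ α a, TensorProduct.tmul_zero, TensorProduct.zero_tmul]
  · rintro ⟨α, a⟩ hne heq
    apply hne
    have hα : a μ = α := congrArg Prod.fst heq
    have h1 : ω p q α μ * (List.ofFn fun k => ω p q (a k) k).prod
        + ω p q α μ * (List.ofFn fun k => ω p q (a k) k).prod = 0 := by
      have := ext_pair p q μ α a
      rwa [← hα, Function.update_eq_self, hα] at this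
    have h2 : ω p q α μ * (List.ofFn fun k => ω p q (a k) k).prod = 0 := by
      have h3 : (2 : ℂ) • (ω p q α μ * (List.ofFn fun k => ω p q (a k) k).prod) = 0 := by
        rw [two_smul]; exact h1
      simpa using h3
    simp [h2]
  · rintro ⟨α, a⟩
    simp [Function.update_idem, Function.update_eq_self]

end FockModel
end
end

section
/- Let R be a commutative ring, B an associative R-algebra, M an R-module, I a finite index type, J any index type, and ℓ a natural number. Let b : J × I → B be a family of pairwise commuting elements (b(j,α)·b(j',α') = b(j',α')·b(j,α) for all j, j' ∈ J and α, α' ∈ I) and let m : I → M. For each function i : {1,…,ℓ} → J define T(i) = Σ_{α : {1,…,ℓ} → I} (b(i(1),α(1)) · b(i(2),α(2)) ⋯ b(i(ℓ),α(ℓ))) ⊗ (m(α(1)) ⊗ ⋯ ⊗ m(α(ℓ))) ∈ B ⊗_R M^{⊗ℓ}. Then for every permutation s of {1,…,ℓ}, T(i ∘ s) = (1 ⊗ σ_s)(T(i)), where σ_s is the R-linear automorphism of M^{⊗ℓ} determined by σ_s(v_1 ⊗ ⋯ ⊗ v_ℓ) = v_{s(1)} ⊗ ⋯ ⊗ v_{s(ℓ)}.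 -/
open scoped TensorProduct
open Finset

/-- **Permutation equivariance of ordered products of commuting operators paired with
tensor slots.**  For pairwise commuting elements `b (j, α)` of an `R`-algebra `B`,
`m : I → M` and `i : Fin ℓ → J`, set
`T(i) = Σ_{α : Fin ℓ → I} (b (i 1, α 1) ⋯ b (i ℓ, α ℓ)) ⊗ (m (α 1) ⊗ ⋯ ⊗ m (α ℓ))`.
Then for every permutation `s` of `Fin ℓ`, `T (i ∘ s) = (1 ⊗ σ_s) (T i)`, where `σ_s`
is the linear automorphism of `M^{⊗ℓ}` with `σ_s (v_1 ⊗ ⋯ ⊗ v_ℓ) = v_{s 1} ⊗ ⋯ ⊗ v_{s ℓ}`. -/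
theorem ordered_product_tensor_perm_equivariant
    (R : Type*) [CommRing R] (B : Type*) [Ring B] [Algebra R B]
    (M : Type*) [AddCommGroup M] [Module R M]
    (I : Type*) [Fintype I] (J : Type*) (ℓ : ℕ)
    (b : J × I → B)
    (hcomm : ∀ (j j' : J) (α α' : I), b (j, α) * b (j', α') = b (j', α') * b (j, α))
    (m : I → M)
    (s : Equiv.Perm (Fin ℓ)) (i : Fin ℓ → J) :
    (∑ α : Fin ℓ → I,
        (List.ofFn fun k => b ((i ∘ s) k, α k)).prod ⊗ₜ[R]
          PiTensorProduct.tprod R fun k => m (α k))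
      = TensorProduct.map LinearMap.id
          (PiTensorProduct.reindex R (fun _ : Fin ℓ => M)
              (s.symm : Fin ℓ ≃ Fin ℓ)).toLinearMap
          (∑ α : Fin ℓ → I,
            (List.ofFn fun k => b (i k, α k)).prod ⊗ₜ[R]
              PiTensorProduct.tprod R fun k => m (α k)) := by
  rw [map_sum]
  simp only [TensorProduct.map_tmul, LinearMap.id_coe, id_eq, LinearEquiv.coe_coe]
  have hre : ∀ α : Fin ℓ → I,
      (PiTensorProduct.reindex R (fun _ : Fin ℓ => M) (s.symm : Fin ℓ ≃ Fin ℓ))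
        (PiTensorProduct.tprod R fun k => m (α k))
        = PiTensorProduct.tprod R fun k => m (α (s k)) := by
    intro α
    rw [PiTensorProduct.reindex_tprod]
    simp
  simp only [hre]
  refine Fintype.sum_equiv (Equiv.arrowCongr s (Equiv.refl I)) _ _ ?_
  intro α
  simp only [Equiv.arrowCongr_apply, Equiv.refl_symm, Equiv.coe_refl, Function.comp_apply,
    Function.comp_def, id_eq, Equiv.symm_apply_apply]
  congr 1
  · refine List.Perm.prod_eq' ?_ ?_
    · have := s.ofFn_comp_perm (fun k => b (i k, α (s.symm k)))
      simpa [Function.comp_def] using this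
    · refine List.pairwise_ofFn.mpr fun k k' _ => hcomm _ _ _ _
end
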